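/- Let (u,v,w) be a G₂-frame in ℝ⁷ (orthonormal with φ₀(u,v,w)=0) and R = χ(u,v,w). Then R×u = −(v×w), R×v = −(w×u), R×w = −(u×v); consequently for all real a,b,c, R×(au+bv+cw) = −a(v×w) − b(w×u) − c(u×v), and R×R″ = −R′. -/

import Mathlib

open scoped RealInnerProductSpace

noncomputable section

/-- ℝ⁷ with its Euclidean inner product. -/
abbrev V7 := EuclideanSpace ℝ (Fin 7)

/-- The standard G₂ 3-form φ₀ = e¹²³+e¹⁴⁵+e¹⁶⁷+e²⁴⁶−e²⁵⁷−e³⁴⁷−e³⁵⁶ on ℝ⁷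
(indices shifted to 0-based), written as a trilinear alternating function. -/
def phi0 : (Fin 3 → V7) → ℝ := fun v =>
  let m : Fin 7 → Fin 7 → Fin 7 → ℝ := fun i j k =>
    Matrix.det !![v 0 i, v 0 j, v 0 k; v 1 i, v 1 j, v 1 k; v 2 i, v 2 j, v 2 k]
  m 0 1 2 + m 0 3 4 + m 0 5 6 + m 1 3 5 - m 1 4 6 - m 2 3 6 - m 2 4 5

/-- The 4-form ∗φ₀ = e⁴⁵⁶⁷+e²³⁶⁷+e²³⁴⁵+e¹³⁵⁷−e¹³⁴⁶−e¹²⁵⁶−e¹²⁴⁷ (0-based indices). -/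
def starPhi0 : (Fin 4 → V7) → ℝ := fun v =>
  let m : Fin 7 → Fin 7 → Fin 7 → Fin 7 → ℝ := fun i j k l =>
    Matrix.det !![v 0 i, v 0 j, v 0 k, v 0 l; v 1 i, v 1 j, v 1 k, v 1 l;
                  v 2 i, v 2 j, v 2 k, v 2 l; v 3 i, v 3 j, v 3 k, v 3 l]
  m 3 4 5 6 + m 1 2 5 6 + m 1 2 3 4 + m 0 2 4 6 - m 0 2 3 5 - m 0 1 4 5 - m 0 1 3 6

/-- The cross product on ℝ⁷: the unique vector with ⟨u×v, z⟩ = φ₀(u,v,z) for all z. -/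
def cross (u v : V7) : V7 := WithLp.toLp 2 (fun i => phi0 ![u, v, EuclideanSpace.single i 1])

/-- The triple cross product χ: the unique vector with ⟨χ(u,v,w), z⟩ = ∗φ₀(u,v,w,z). -/
def chi (u v w : V7) : V7 := WithLp.toLp 2 (fun i => starPhi0 ![u, v, w, EuclideanSpace.single i 1])

/-- Interior product ξ⌟α : contraction of a (k+1)-form with ξ in its first slot. -/
def iprod {k : ℕ} (ξ : V7) (α : (Fin (k + 1) → V7) → ℝ) : (Fin k → V7) → ℝ :=
  fun v => α (Fin.cons ξ v)

/-- Wedge product of alternating forms (determinant convention). -/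
def wedge {p q : ℕ} (α : (Fin p → V7) → ℝ) (β : (Fin q → V7) → ℝ) :
    (Fin (p + q) → V7) → ℝ := fun v =>
  (1 / ((p.factorial : ℝ) * q.factorial)) *
    ∑ σ : Equiv.Perm (Fin (p + q)), ((Equiv.Perm.sign σ : ℤ) : ℝ) *
      α (fun i => v (σ (Fin.castAdd q i))) * β (fun j => v (σ (Fin.natAdd p j)))

/-- The dual covector ξ^# = ⟨ξ,·⟩, as a 1-form. -/
def dualCov (ξ : V7) : (Fin 1 → V7) → ℝ := fun v => ⟪ξ, v 0⟫

/-- The standard volume form e¹∧⋯∧e⁷ on ℝ⁷. -/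
def vol7 : (Fin 7 → V7) → ℝ := fun v => Matrix.det (Matrix.of fun i j => v i j)

/-!
For arbitrary `u v w` one has the polynomial identity
`χ(u,v,w) × u = φ₀(u,v,w) u - |u|² v×w - ⟨u,v⟩ w×u - ⟨u,w⟩ u×v`,
which for a G₂-frame collapses to `-(v×w)`. Both `χ` and `φ₀` are invariant under cyclic
permutations of `(u,v,w)`, so the same identity computes `R×v` and `R×w`; the remaining claims
follow by linearity of `×` in its second argument.
-/

theorem Matrix.det_fin_four {R : Type*} [CommRing R] (A : Matrix (Fin 4) (Fin 4) R) :
    A.det =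
      A 0 0 * A 1 1 * A 2 2 * A 3 3 - A 0 0 * A 1 1 * A 2 3 * A 3 2
      - A 0 0 * A 1 2 * A 2 1 * A 3 3 + A 0 0 * A 1 2 * A 2 3 * A 3 1
      + A 0 0 * A 1 3 * A 2 1 * A 3 2 - A 0 0 * A 1 3 * A 2 2 * A 3 1
      - A 0 1 * A 1 0 * A 2 2 * A 3 3 + A 0 1 * A 1 0 * A 2 3 * A 3 2
      + A 0 1 * A 1 2 * A 2 0 * A 3 3 - A 0 1 * A 1 2 * A 2 3 * A 3 0
      - A 0 1 * A 1 3 * A 2 0 * A 3 2 + A 0 1 * A 1 3 * A 2 2 * A 3 0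
      + A 0 2 * A 1 0 * A 2 1 * A 3 3 - A 0 2 * A 1 0 * A 2 3 * A 3 1
      - A 0 2 * A 1 1 * A 2 0 * A 3 3 + A 0 2 * A 1 1 * A 2 3 * A 3 0
      + A 0 2 * A 1 3 * A 2 0 * A 3 1 - A 0 2 * A 1 3 * A 2 1 * A 3 0
      - A 0 3 * A 1 0 * A 2 1 * A 3 2 + A 0 3 * A 1 0 * A 2 2 * A 3 1
      + A 0 3 * A 1 1 * A 2 0 * A 3 2 - A 0 3 * A 1 1 * A 2 2 * A 3 0
      - A 0 3 * A 1 2 * A 2 0 * A 3 1 + A 0 3 * A 1 2 * A 2 1 * A 3 0 := by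
  simp [Matrix.det_succ_row_zero, Fin.sum_univ_succ, Fin.succAbove]
  ring

theorem phi0_cyclic (u v w : V7) : phi0 ![v, w, u] = phi0 ![u, v, w] := by
  simp [phi0, Matrix.det_fin_three]
  ring

set_option maxHeartbeats 1000000 in
theorem chi_cyclic (u v w : V7) : chi v w u = chi u v w := by
  ext i
  fin_cases i <;> simp [chi, starPhi0, Matrix.det_fin_four] <;> ring

theorem cross_add_right (x y z : V7) : cross x (y + z) = cross x y + cross x z := by
  ext i
  fin_cases i <;> simp [cross, phi0, Matrix.det_fin_three] <;> ring

theorem cross_smul_right (a : ℝ) (x y : V7) : cross x (a • y) = a • cross x y := by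
  ext i
  fin_cases i <;> simp [cross, phi0, Matrix.det_fin_three] <;> ring

set_option maxHeartbeats 1000000 in
theorem cross_chi_first_arg (u v w : V7) :
    cross (chi u v w) u =
      phi0 ![u, v, w] • u - ‖u‖ ^ 2 • cross v w - ⟪u, v⟫ • cross w u - ⟪u, w⟫ • cross u v := by
  ext i
  fin_cases i <;>
    simp [cross, chi, phi0, starPhi0, Matrix.det_fin_four, Matrix.det_fin_three,
      EuclideanSpace.norm_sq_eq, PiLp.inner_apply, Fin.sum_univ_seven] <;> ring

theorem cross_chi_first_arg_eq_neg {u v w : V7} (hu : ‖u‖ = 1) (huv : ⟪u, v⟫ = 0)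
    (huw : ⟪u, w⟫ = 0) (hφ : phi0 ![u, v, w] = 0) : cross (chi u v w) u = -cross v w := by
  rw [cross_chi_first_arg, hu, hφ, huv, huw]
  simp

/-- for a G₂-frame (u,v,w) and R = χ(u,v,w):
R×u = −(v×w), R×v = −(w×u), R×w = −(u×v); hence
R×(au+bv+cw) = −a(v×w)−b(w×u)−c(u×v) and R×R″ = −R′. -/
theorem cross_R (u v w : V7) (h : Orthonormal ℝ ![u, v, w])
    (hφ : phi0 ![u, v, w] = 0) (R R' R'' : V7) (hR : R = chi u v w)
    (hR' : R' = (Real.sqrt 3)⁻¹ • (cross u v + cross v w + cross w u))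
    (hR'' : R'' = (Real.sqrt 3)⁻¹ • (u + v + w)) :
    cross R u = -cross v w ∧ cross R v = -cross w u ∧ cross R w = -cross u v ∧
    (∀ a b c : ℝ, cross R (a • u + b • v + c • w) =
      -(a • cross v w) - b • cross w u - c • cross u v) ∧
    cross R R'' = -R' := by
  have hu : ‖u‖ = 1 := h.1 0
  have hv : ‖v‖ = 1 := h.1 1
  have hw : ‖w‖ = 1 := h.1 2
  have huv : ⟪u, v⟫ = 0 := h.2 (show (0 : Fin 3) ≠ 1 by decide)
  have huw : ⟪u, w⟫ = 0 := h.2 (show (0 : Fin 3) ≠ 2 by decide)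
  have hvw : ⟪v, w⟫ = 0 := h.2 (show (1 : Fin 3) ≠ 2 by decide)
  have hRu : cross R u = -cross v w := hR ▸ cross_chi_first_arg_eq_neg hu huv huw hφ
  have hRv : cross R v = -cross w u := by
    rw [hR, ← chi_cyclic]
    exact cross_chi_first_arg_eq_neg hv hvw (real_inner_comm u v ▸ huv)
      (by rw [phi0_cyclic, hφ])
  have hRw : cross R w = -cross u v := by
    rw [hR, ← chi_cyclic, ← chi_cyclic]
    exact cross_chi_first_arg_eq_neg hw (real_inner_comm u w ▸ huw)
      (real_inner_comm v w ▸ hvw) (by rw [phi0_cyclic, phi0_cyclic, hφ])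
  have hcomb (a b c : ℝ) : cross R (a • u + b • v + c • w) =
      -(a • cross v w) - b • cross w u - c • cross u v := by
    simp only [cross_add_right, cross_smul_right, hRu, hRv, hRw]
    module
  refine ⟨hRu, hRv, hRw, hcomb, ?_⟩
  rw [hR'', smul_add, smul_add, hcomb, hR']
  module

end
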